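/- Let Y be a smooth complex variety with H^k(Y, Q) = 0 for all odd k < N, and {X_1, ..., X_n} a properly intersecting collection of smooth subvarieties such that every intersection ∩_{i∈I} X_i is smooth with vanishing odd rational cohomology in degrees k < N. Let Y_1 = Y and Y_{i+1} be the blow-up of Y_i along the proper transform of X_i. Then H^k(Y_i, Q) = 0 for every odd k < N and every i ≤ n+1. -/
import Mathlib


/-- Vakil–Zinger Lemma on iterated blow-ups, part (ii), in abstract form.
Same setup as part (i): `Sm j I` and `B j I` record smoothness and rational
Betti numbers of the intersection `⋂_{i ∈ I} X_i^j` of proper transforms in the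
iterated blow-up `Y_j`, with the properly-intersecting recursions `hsm_step`,
`hB_step`.  In addition `bY i` records the rational Betti numbers of `Y_i`,
`Y_1 = Y` has vanishing odd cohomology in degrees `< N` (`hY`), and
`Y_{i+1} = Bl_{X_i^i} Y_i` gives the blow-up formula `hY_step` (with `d i` the
codimension of the center `X_i^i`, whose Betti numbers are `B i {i}`).
Conclusion: `H^k(Y_i, ℚ) = 0` for every odd `k < N` and every `i ≤ n + 1`. -/
theorem iterated_blowup_odd_vanishing (N n : ℕ)
    (Sm : ℕ → Finset ℕ → Prop) (B : ℕ → Finset ℕ → ℤ → ℕ) (c : ℕ → Finset ℕ → ℕ)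
    (bY : ℕ → ℤ → ℕ) (d : ℕ → ℕ)
    (hbase_sm : ∀ I ⊆ Finset.Icc 1 n, Sm 1 I)
    (hbase_van : ∀ I ⊆ Finset.Icc 1 n, ∀ k : ℤ, Odd k → k < N → B 1 I k = 0)
    (hsm_step : ∀ j, ∀ I ⊆ Finset.Icc (j + 1) n,
      Sm j I → Sm j (insert j I) → Sm (j + 1) I)
    (hB_step : ∀ j, ∀ I ⊆ Finset.Icc (j + 1) n, ∀ m : ℤ,
      B (j + 1) I m = B j I m + ∑ k ∈ Finset.Ico 1 (c j I), B j (insert j I) (m - 2 * k))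
    -- `Y₁ = Y` has vanishing odd rational cohomology in degrees `< N`
    (hY : ∀ k : ℤ, Odd k → k < N → bY 1 k = 0)
    -- blow-up formula for `Y_{i+1} = Bl_{X_i^i} Y_i`
    (hY_step : ∀ i, 1 ≤ i → i ≤ n → ∀ m : ℤ,
      bY (i + 1) m = bY i m + ∑ k ∈ Finset.Ico 1 (d i), B i {i} (m - 2 * k)) :
    ∀ i, 1 ≤ i → i ≤ n + 1 → ∀ k : ℤ, Odd k → k < N → bY i k = 0 := by
  -- Part (i): odd vanishing of the Betti numbers of the intersections.
  have hB : ∀ j, 1 ≤ j → j ≤ n → ∀ I ⊆ Finset.Icc j n,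
      ∀ k : ℤ, Odd k → k < N → B j I k = 0 := by
    intro j
    induction j with
    | zero => omega
    | succ j ih =>
      intro _ hjn I hI k hk hkN
      rcases Nat.eq_or_lt_of_le (Nat.one_le_iff_ne_zero.mpr (by omega) : 1 ≤ j + 1) with h1 | h1
      · rw [← h1] at hI ⊢; exact hbase_van I hI k hk hkN
      have hj1 : 1 ≤ j := by omega
      have hjn' : j ≤ n := by omega
      rw [hB_step j I hI k]
      have hI' : I ⊆ Finset.Icc j n := hI.trans (Finset.Icc_subset_Icc (by omega) le_rfl)
      have hins : insert j I ⊆ Finset.Icc j n := by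
        intro x hx
        rcases Finset.mem_insert.mp hx with rfl | hx
        · exact Finset.mem_Icc.mpr ⟨le_rfl, hjn'⟩
        · exact hI' hx
      rw [ih hj1 hjn' I hI' k hk hkN]
      simp only [Nat.zero_add]
      apply Finset.sum_eq_zero
      intro m hm
      have hm1 : 1 ≤ m := (Finset.mem_Ico.mp hm).1
      apply ih hj1 hjn' (insert j I) hins
      · exact hk.sub_even (even_two_mul _)
      · have : (0:ℤ) ≤ 2 * m := by positivity
        omega
  -- Part (ii): induction on i.
  intro i
  induction i with
  | zero => omega
  | succ i ih =>
    intro _ hin k hk hkN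
    rcases Nat.eq_or_lt_of_le (Nat.one_le_iff_ne_zero.mpr (by omega) : 1 ≤ i + 1) with h1 | h1
    · rw [← h1]; exact hY k hk hkN
    have hi1 : 1 ≤ i := by omega
    have hin' : i ≤ n := by omega
    rw [hY_step i hi1 hin' k, ih hi1 (by omega) k hk hkN]
    simp only [Nat.zero_add]
    apply Finset.sum_eq_zero
    intro m hm
    have hm1 : 1 ≤ m := (Finset.mem_Ico.mp hm).1
    apply hB i hi1 hin' {i} (by simp [Finset.singleton_subset_iff, Finset.mem_Icc, hin'])
    · exact hk.sub_even (even_two_mul _)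
    · have : (0:ℤ) ≤ 2 * m := by positivity
      omega
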